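/- arXiv:2403.09701 — 3 statements merged into one kernel-verified Lean document; each statement's English description precedes it below -/
import Mathlib

section
/- Let a_1,...,a_T be nonnegative reals and c > 0 such that a_t ≤ c for all t. Then ∑_{t=1}^T a_t / (c + ∑_{i=1}^{t-1} a_i) ≤ 2·log(1 + T). -/
/-! With `S t = c + ∑_{i<t} a i`, each ratio `a t / S t` lies in `[0, 1]`, so it is at most
`2 log (1 + a t / S t) = 2 (log S (t+1) - log S t)`. These increments telescope to
`2 log (S T / c)`, and `S T ≤ (1 + T) c` because every `a t ≤ c`. -/

open Finset Real

lemma le_two_mul_log_one_add {u : ℝ} (h0 : 0 ≤ u) (h1 : u ≤ 1) : u ≤ 2 * log (1 + u) := by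
  have hlog : 1 - (1 + u)⁻¹ ≤ log (1 + u) := one_sub_inv_le_log_of_pos (by linarith)
  have hrat : 1 - (1 + u)⁻¹ = u / (1 + u) := by field_simp; ring
  have hhalf : u / 2 ≤ u / (1 + u) := div_le_div_of_nonneg_left h0 (by linarith) (by linarith)
  linarith

lemma div_le_two_mul_log_add_sub_log {x y : ℝ} (hx : 0 < x) (hy : 0 ≤ y) (hyx : y ≤ x) :
    y / x ≤ 2 * (log (x + y) - log x) := by
  have hlog : log (x + y) - log x = log (1 + y / x) := by
    rw [← log_div (by positivity) hx.ne', add_div, div_self hx.ne']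
  rw [hlog]
  exact le_two_mul_log_one_add (div_nonneg hy hx.le) ((div_le_one hx).2 hyx)

theorem sum_div_partialSum_le_two_mul_log (T : ℕ) (a : ℕ → ℝ) {c : ℝ} (hc : 0 < c)
    (ha : ∀ t < T, 0 ≤ a t) (hac : ∀ t < T, a t ≤ c + ∑ i ∈ range t, a i) :
    ∑ t ∈ range T, a t / (c + ∑ i ∈ range t, a i)
      ≤ 2 * (log (c + ∑ i ∈ range T, a i) - log c) := by
  set S : ℕ → ℝ := fun t ↦ c + ∑ i ∈ range t, a i
  have hS_pos : ∀ t < T, 0 < S t := fun t ht ↦ by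
    have : 0 ≤ ∑ i ∈ range t, a i := sum_nonneg fun i hi ↦ ha i (by simp at hi; omega)
    positivity
  calc ∑ t ∈ range T, a t / S t
      ≤ ∑ t ∈ range T, 2 * (log (S (t + 1)) - log (S t)) := by
        refine sum_le_sum fun t ht ↦ ?_
        rw [mem_range] at ht
        have hstep : S (t + 1) = S t + a t := by simp only [S, sum_range_succ]; ring
        rw [hstep]
        exact div_le_two_mul_log_add_sub_log (hS_pos t ht) (ha t ht) (hac t ht)
    _ = 2 * (log (S T) - log (S 0)) := by rw [← mul_sum, sum_range_sub (fun t ↦ log (S t))]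
    _ = 2 * (log (S T) - log c) := by simp [S]

theorem stmt_1 (T : ℕ) (a : ℕ → ℝ) (c : ℝ) (hc : 0 < c)
    (ha : ∀ t < T, 0 ≤ a t) (hac : ∀ t < T, a t ≤ c) :
    ∑ t ∈ Finset.range T, a t / (c + ∑ i ∈ Finset.range t, a i)
      ≤ 2 * Real.log (1 + T) := by
  have hsum_nonneg : ∀ t ≤ T, 0 ≤ ∑ i ∈ range t, a i := fun t ht ↦
    sum_nonneg fun i hi ↦ ha i (by simp at hi; omega)
  have hsum_le : ∑ i ∈ range T, a i ≤ T * c := by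
    simpa using sum_le_sum fun i hi ↦ hac i (mem_range.1 hi)
  have hpotential := sum_div_partialSum_le_two_mul_log T a hc ha
    fun t ht ↦ by linarith [hac t ht, hsum_nonneg t ht.le]
  have hlog : log (c + ∑ i ∈ range T, a i) - log c ≤ log (1 + T) := by
    rw [← log_div (by linarith [hsum_nonneg T le_rfl]) hc.ne']
    refine log_le_log (div_pos (by linarith [hsum_nonneg T le_rfl]) hc) ?_
    rw [div_le_iff₀ hc]
    linarith
  linarith
end

section
/- Let Λ_0 be a positive definite d×d real matrix with smallest eigenvalue at least 1, and let φ_1,...,φ_t ∈ ℝ^d with ‖φ_j‖ ≤ 1 for all j. Define Λ_j = Λ_0 + ∑_{i=1}^j φ_i φ_i^T. Then log(det(Λ_t)/det(Λ_0)) ≤ ∑_{j=1}^t φ_j^T Λ_{j-1}^{-1} φ_j ≤ 2·log(det(Λ_t)/det(Λ_0)). -/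
/-!
Write `x_j = φ_jᵀ Λ_j⁻¹ φ_j` (here `Λ_j` is the matrix before the `j`-th update). By the
matrix determinant lemma `det Λ_{j+1} = det Λ_j · (1 + x_j)`, so the log-determinant ratio
telescopes to `∑ log (1 + x_j)`. Since `Λ_j ≥ Λ₀ ≥ I`, also `x_j ≤ ‖φ_j‖² ≤ 1`, and the two bounds
follow termwise from `log (1 + x) ≤ x ≤ 2 log (1 + x)` on `[0, 1]`.
-/

open Matrix

namespace Matrix

variable {n : Type*} [Fintype n]

theorem PosSemidef.dotProduct_mulVec_le_add {A B : Matrix n n ℝ} (hB : B.PosSemidef)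
    (x : n → ℝ) : x ⬝ᵥ A *ᵥ x ≤ x ⬝ᵥ (A + B) *ᵥ x := by
  rw [add_mulVec, dotProduct_add, le_add_iff_nonneg_right]
  simpa using hB.dotProduct_mulVec_nonneg x

variable [DecidableEq n]

theorem det_one_add_vecMulVec {α : Type*} [CommRing α] (u v : n → α) :
    (1 + vecMulVec u v).det = 1 + v ⬝ᵥ u := by
  rw [vecMulVec_eq Unit, det_one_add_replicateCol_mul_replicateRow]

theorem det_add_vecMulVec {α : Type*} [CommRing α] {A : Matrix n n α} (hA : IsUnit A.det)
    (u v : n → α) : (A + vecMulVec u v).det = A.det * (1 + v ⬝ᵥ A⁻¹ *ᵥ u) := by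
  have hfactor : A + vecMulVec u v = A * (1 + vecMulVec (A⁻¹ *ᵥ u) v) := by
    rw [Matrix.mul_add, Matrix.mul_one, mul_vecMulVec, mulVec_mulVec, mul_nonsing_inv A hA,
      one_mulVec]
  rw [hfactor, det_mul, det_one_add_vecMulVec]

theorem dotProduct_inv_mulVec_le_dotProduct_self {A : Matrix n n ℝ} (hA : IsUnit A.det)
    (hA₁ : ∀ x, x ⬝ᵥ x ≤ x ⬝ᵥ A *ᵥ x) (v : n → ℝ) : v ⬝ᵥ A⁻¹ *ᵥ v ≤ v ⬝ᵥ v := by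
  set y := A⁻¹ *ᵥ v
  have hAy : A *ᵥ y = v := by rw [mulVec_mulVec, mul_nonsing_inv A hA, one_mulVec]
  have hy : y ⬝ᵥ y ≤ y ⬝ᵥ v := hAy ▸ hA₁ y
  -- `0 ≤ ‖v - y‖² = ‖v‖² - 2 ⟪v, y⟫ + ‖y‖² ≤ ‖v‖² - ⟪v, y⟫`
  have hsq : 0 ≤ (v - y) ⬝ᵥ (v - y) := by simpa using dotProduct_star_self_nonneg (v - y)
  simp only [sub_dotProduct, dotProduct_sub, dotProduct_comm y v] at hsq hy ⊢
  linarith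

end Matrix

theorem Real.le_two_mul_log_one_add {x : ℝ} (h₀ : 0 ≤ x) (h₂ : x ≤ 2) :
    x ≤ 2 * Real.log (1 + x) := by
  have h := Real.le_log_one_add_of_nonneg h₀
  rw [div_le_iff₀ (by linarith)] at h
  nlinarith

theorem Real.log_div_eq_sum_log_of_mul {a r : ℕ → ℝ} {t : ℕ} (ha : ∀ j ≤ t, a j ≠ 0)
    (h : ∀ j < t, a (j + 1) = a j * r j) :
    Real.log (a t / a 0) = ∑ j ∈ Finset.range t, Real.log (r j) := by
  have hprod : ∏ j ∈ Finset.range t, r j = a t / a 0 :=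
    Finset.prod_range_induction r (fun j => a j / a 0) (div_self (ha 0 t.zero_le)) t
      fun j hj => by rw [h j hj, mul_div_right_comm]
  rw [← hprod, Real.log_prod fun j hj => ?_]
  have hj := Finset.mem_range.mp hj
  exact right_ne_zero_of_mul (h j hj ▸ ha (j + 1) hj)

theorem stmt_6 {d : ℕ} (Λ₀ : Matrix (Fin d) (Fin d) ℝ) (hΛ₀ : Λ₀.PosDef)
    (hmin : ∀ x : Fin d → ℝ, x ⬝ᵥ x ≤ x ⬝ᵥ Λ₀.mulVec x)
    (t : ℕ) (φ : ℕ → (Fin d → ℝ)) (hφ : ∀ j < t, Real.sqrt (φ j ⬝ᵥ φ j) ≤ 1)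
    (Λ : ℕ → Matrix (Fin d) (Fin d) ℝ)
    (hΛ : ∀ j, Λ j = Λ₀ + ∑ i ∈ Finset.range j, vecMulVec (φ i) (φ i)) :
    Real.log ((Λ t).det / Λ₀.det) ≤
        ∑ j ∈ Finset.range t, φ j ⬝ᵥ (Λ j)⁻¹.mulVec (φ j) ∧
      ∑ j ∈ Finset.range t, φ j ⬝ᵥ (Λ j)⁻¹.mulVec (φ j) ≤
        2 * Real.log ((Λ t).det / Λ₀.det) := by
  have hupdates : ∀ j, (∑ i ∈ Finset.range j, vecMulVec (φ i) (φ i)).PosSemidef := fun j =>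
    posSemidef_sum _ fun i _ => by simpa using posSemidef_vecMulVec_self_star (φ i)
  have hpos : ∀ j, (Λ j).PosDef := fun j => hΛ j ▸ hΛ₀.add_posSemidef (hupdates j)
  have hge : ∀ j x, x ⬝ᵥ x ≤ x ⬝ᵥ Λ j *ᵥ x := fun j x =>
    hΛ j ▸ (hmin x).trans ((hupdates j).dotProduct_mulVec_le_add x)
  set x : ℕ → ℝ := fun j => φ j ⬝ᵥ (Λ j)⁻¹ *ᵥ φ j
  have hx₀ : ∀ j, 0 ≤ x j := fun j => by
    simpa using (hpos j).inv.posSemidef.dotProduct_mulVec_nonneg (φ j)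
  have hx₁ : ∀ j < t, x j ≤ 1 := fun j hj =>
    (dotProduct_inv_mulVec_le_dotProduct_self (hpos j).det_pos.ne'.isUnit (hge j) (φ j)).trans
      (Real.sqrt_le_one.mp (hφ j hj))
  have hdet : ∀ j, (Λ (j + 1)).det = (Λ j).det * (1 + x j) := fun j => by
    rw [hΛ (j + 1), Finset.sum_range_succ, ← add_assoc, ← hΛ j,
      det_add_vecMulVec (hpos j).det_pos.ne'.isUnit]
  have hlog := Real.log_div_eq_sum_log_of_mul (t := t) (fun j _ => (hpos j).det_pos.ne')
    fun j _ => hdet j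
  rw [hΛ 0, Finset.sum_range_zero, add_zero] at hlog
  rw [hlog, Finset.mul_sum]
  constructor
  · exact Finset.sum_le_sum fun j _ => by
      linarith [Real.log_le_sub_one_of_pos (by linarith [hx₀ j] : 0 < 1 + x j)]
  · exact Finset.sum_le_sum fun j hj =>
      Real.le_two_mul_log_one_add (hx₀ j) (by linarith [hx₁ j (Finset.mem_range.mp hj)])
end

section
/- Let X be a finite set, μ* a probability measure on X, c ≥ 1, and d_1,...,d_T probability measures on X with d_t(x) ≤ c·μ*(x) for all t, x. With τ(x) = min{t : ∑_{i<t} d_i(x) ≥ c·μ*(x)}, it holds that ∑_{t=1}^T ∑_x d_t(x)²·1[t ≥ τ(x)] / ∑_{i=1}^{t-1} d_i(x) ≤ 2c·∑_x μ*(x) · 2log(1+T) = O(c·log T). -/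
/-!
Split the sum point by point. At a point `x` put `a = c μ(x)` and let `S_t = ∑_{i<t} d_i(x)`.
After burn-in `S_t ≥ a`, so `S_t ≥ (a + S_t)/2`, and `d_t(x) ≤ a`; hence the `t`-th term is at most
`2a · d_t(x)/(a + S_t)`. Since `d_t(x)/(a + S_t) ≤ 1`, each such ratio is at most
`2 log((a + S_{t+1})/(a + S_t))`, which telescopes to `2 log((a + S_T)/a) ≤ 2 log(1 + T)`.
Summing `4 a log(1 + T)` over `x` gives `4 c log(1 + T)`.
-/

open Finset Real

lemma div_le_two_mul_log_add_sub_log_s16 {b e : ℝ} (hb : 0 < b) (he0 : 0 ≤ e) (heb : e ≤ b) :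
    e / b ≤ 2 * (log (b + e) - log b) := by
  set u := e / b
  have hu0 : 0 ≤ u := div_nonneg he0 hb.le
  have hu1 : u ≤ 1 := (div_le_one hb).2 heb
  have hlog : log (b + e) - log b = log (1 + u) := by
    rw [← log_div (by linarith) hb.ne', add_div, div_self hb.ne']
  have hu : u / 2 ≤ 2 * u / (u + 2) := by
    rw [div_le_div_iff₀ two_pos (by linarith)]
    nlinarith
  linarith [le_log_one_add_of_nonneg hu0]

lemma sum_range_div_add_sum_range_le_two_mul_log {a : ℝ} (ha : 0 < a) {e : ℕ → ℝ}
    (he0 : ∀ i, 0 ≤ e i) (hea : ∀ i, e i ≤ a) (T : ℕ) :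
    ∑ t ∈ range T, e t / (a + ∑ i ∈ range t, e i)
      ≤ 2 * (log (a + ∑ i ∈ range T, e i) - log a) := by
  induction T with
  | zero => simp
  | succ n ih =>
    have hS : 0 ≤ ∑ i ∈ range n, e i := sum_nonneg fun i _ => he0 i
    have hstep := div_le_two_mul_log_add_sub_log_s16 (b := a + ∑ i ∈ range n, e i)
      (by linarith) (he0 n) (by linarith [hea n])
    rw [sum_range_succ, sum_range_succ, ← add_assoc]
    linarith

lemma sum_range_div_add_sum_range_le_two_mul_log_one_add {a : ℝ} (ha : 0 < a) {e : ℕ → ℝ}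
    (he0 : ∀ i, 0 ≤ e i) (hea : ∀ i, e i ≤ a) (T : ℕ) :
    ∑ t ∈ range T, e t / (a + ∑ i ∈ range t, e i) ≤ 2 * log (1 + T) := by
  have hS0 : 0 ≤ ∑ i ∈ range T, e i := sum_nonneg fun i _ => he0 i
  have hST : ∑ i ∈ range T, e i ≤ T * a := by
    simpa using sum_le_sum fun i (_ : i ∈ range T) => hea i
  have hlog : log (a + ∑ i ∈ range T, e i) - log a ≤ log (1 + T) := by
    rw [← log_div (by linarith) ha.ne']
    refine log_le_log (by positivity) ?_
    rw [div_le_iff₀ ha]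
    linarith
  linarith [sum_range_div_add_sum_range_le_two_mul_log ha he0 hea T]

lemma sq_div_le_two_mul_mul_div_add {a e S : ℝ} (ha : 0 ≤ a) (he0 : 0 ≤ e) (hea : e ≤ a)
    (haS : a ≤ S) : e ^ 2 / S ≤ 2 * a * (e / (a + S)) := by
  rcases (ha.trans haS).eq_or_lt with hS | hS
  · rw [← hS, div_zero]
    positivity
  calc e ^ 2 / S ≤ a * e / S := by gcongr; nlinarith
    _ ≤ a * e / ((a + S) / 2) := by gcongr; linarith
    _ = 2 * a * (e / (a + S)) := by field_simp

lemma sum_range_ite_sq_div_le {a : ℝ} (ha : 0 ≤ a) {e : ℕ → ℝ}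
    (he0 : ∀ i, 0 ≤ e i) (hea : ∀ i, e i ≤ a) (T : ℕ) :
    ∑ t ∈ range T,
        (if a ≤ ∑ i ∈ range t, e i then e t ^ 2 / ∑ i ∈ range t, e i else 0)
      ≤ 4 * a * log (1 + T) := by
  rcases ha.eq_or_lt with rfl | ha
  · have he : ∀ i, e i = 0 := fun i => le_antisymm (hea i) (he0 i)
    simp [he]
  have hterm : ∀ t ∈ range T,
      (if a ≤ ∑ i ∈ range t, e i then e t ^ 2 / ∑ i ∈ range t, e i else 0)
        ≤ 2 * a * (e t / (a + ∑ i ∈ range t, e i)) := by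
    intro t _
    split_ifs with hburn
    · exact sq_div_le_two_mul_mul_div_add ha.le (he0 t) (hea t) hburn
    · have : 0 ≤ ∑ i ∈ range t, e i := sum_nonneg fun i _ => he0 i
      have := he0 t
      positivity
  calc _ ≤ ∑ t ∈ range T, 2 * a * (e t / (a + ∑ i ∈ range t, e i)) := sum_le_sum hterm
    _ = 2 * a * ∑ t ∈ range T, e t / (a + ∑ i ∈ range t, e i) := (mul_sum ..).symm
    _ ≤ 2 * a * (2 * log (1 + T)) := by
      gcongr
      exact sum_range_div_add_sum_range_le_two_mul_log_one_add ha he0 hea T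
    _ = 4 * a * log (1 + T) := by ring

theorem stmt_16_general {X : Type*} [Fintype X] (T : ℕ)
    (μ : X → ℝ) (hμ0 : ∀ x, 0 ≤ μ x) (hμ1 : ∑ x, μ x = 1)
    (d : ℕ → X → ℝ) (hd0 : ∀ t x, 0 ≤ d t x)
    (c : ℝ) (hc : 1 ≤ c) (hdc : ∀ t x, d t x ≤ c * μ x) :
    ∑ t ∈ Finset.range T, ∑ x,
        (if c * μ x ≤ ∑ i ∈ Finset.range t, d i x then
          (d t x) ^ 2 / ∑ i ∈ Finset.range t, d i x else 0)
      ≤ 4 * c * Real.log (1 + T) := by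
  rw [sum_comm]
  calc _ ≤ ∑ x, 4 * (c * μ x) * log (1 + T) := sum_le_sum fun x _ =>
        sum_range_ite_sq_div_le (mul_nonneg (by linarith) (hμ0 x))
          (fun i => hd0 i x) (fun i => hdc i x) T
    _ = 4 * c * log (1 + T) := by
        simp_rw [← mul_assoc, ← sum_mul, ← mul_sum, hμ1, mul_one]

theorem stmt_16 {X : Type*} [Fintype X] (T : ℕ)
    (μ : X → ℝ) (hμ0 : ∀ x, 0 ≤ μ x) (hμ1 : ∑ x, μ x = 1)
    (d : ℕ → X → ℝ) (hd0 : ∀ t x, 0 ≤ d t x) (hd1 : ∀ t, ∑ x, d t x = 1)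
    (c : ℝ) (hc : 1 ≤ c) (hdc : ∀ t x, d t x ≤ c * μ x) :
    ∑ t ∈ Finset.range T, ∑ x,
        (if c * μ x ≤ ∑ i ∈ Finset.range t, d i x then
          (d t x) ^ 2 / ∑ i ∈ Finset.range t, d i x else 0)
      ≤ 4 * c * Real.log (1 + T) :=
  stmt_16_general T μ hμ0 hμ1 d hd0 c hc hdc
end
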